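/- arXiv:2404.18151 — 3 statements merged into one kernel-verified Lean document; each statement's English description precedes it below -/
import Mathlib

section
/- For every n-GNN all of whose activation functions are eventually constant (with rational coefficient matrices and bias vectors), and for every layer index ℓ with 0 ≤ ℓ ≤ L, the ℓ-spectrum of the GNN is a finite set. -/
set_option maxHeartbeats 1000000

/-- An `n`-graph: a nonempty finite vertex set, a set of directed edges,
and `n` vertex colors. -/
structure NGraph (n : ℕ) where
  V : Type
  [fintypeV : Fintype V]
  [decEqV : DecidableEq V]
  nonemptyV : Nonempty V
  E : V → V → Bool
  U : Fin n → V → Bool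

attribute [instance] NGraph.fintypeV NGraph.decEqV

/-- An `n`-GNN.  Layer `ℓ+1` (for `0 ≤ ℓ < L`) has activation function `act ℓ`,
coefficient matrices `C ℓ`, `Aout ℓ`, `Ain ℓ`, `R ℓ` and bias vector `b ℓ`. -/
structure GNN (n : ℕ) where
  L : ℕ
  Lpos : 0 < L
  d : ℕ → ℕ
  d0 : d 0 = n
  dpos : ∀ ℓ, 0 < d ℓ
  act : ℕ → ℚ → ℚ
  C : (ℓ : ℕ) → Matrix (Fin (d (ℓ+1))) (Fin (d ℓ)) ℚ
  Aout : (ℓ : ℕ) → Matrix (Fin (d (ℓ+1))) (Fin (d ℓ)) ℚ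
  Ain : (ℓ : ℕ) → Matrix (Fin (d (ℓ+1))) (Fin (d ℓ)) ℚ
  R : (ℓ : ℕ) → Matrix (Fin (d (ℓ+1))) (Fin (d ℓ)) ℚ
  b : (ℓ : ℕ) → Fin (d (ℓ+1)) → ℚ

/-- The feature maps `ξ⁽ℓ⁾` computed by a GNN on an `n`-graph. -/
def GNN.feat {n : ℕ} (A : GNN n) (G : NGraph n) : (ℓ : ℕ) → G.V → (Fin (A.d ℓ) → ℚ)
  | 0 => fun v i => if G.U (Fin.cast A.d0 i) v then 1 else 0
  | ℓ+1 => fun v i =>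
      A.act ℓ
        ((A.C ℓ).mulVec (A.feat G ℓ v) i
          + (A.Aout ℓ).mulVec (∑ u ∈ Finset.univ.filter (fun u => G.E v u), A.feat G ℓ u) i
          + (A.Ain ℓ).mulVec (∑ u ∈ Finset.univ.filter (fun u => G.E u v), A.feat G ℓ u) i
          + (A.R ℓ).mulVec (∑ u, A.feat G ℓ u) i
          + A.b ℓ i)

/-- A GNN accepts `(G, v)` if the first entry of the final feature vector is `≥ 1/2`. -/
def GNN.accepts {n : ℕ} (A : GNN n) (G : NGraph n) (v : G.V) : Prop :=
  1/2 ≤ A.feat G A.L v ⟨0, A.dpos A.L⟩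

/-- A GNN is satisfiable if it accepts some node of some graph. -/
def GNN.Satisfiable {n : ℕ} (A : GNN n) : Prop :=
  ∃ (G : NGraph n) (v : G.V), A.accepts G v

/-- A GNN is universally satisfiable if it accepts every node of some graph. -/
def GNN.UnivSatisfiable {n : ℕ} (A : GNN n) : Prop :=
  ∃ G : NGraph n, ∀ v : G.V, A.accepts G v

/-- A GNN is local if all its global-readout matrices are zero. -/
def GNN.IsLocal {n : ℕ} (A : GNN n) : Prop := ∀ ℓ < A.L, A.R ℓ = 0

/-- A GNN is outgoing-only if all its incoming-aggregation matrices are zero. -/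
def GNN.IsOutgoingOnly {n : ℕ} (A : GNN n) : Prop := ∀ ℓ < A.L, A.Ain ℓ = 0

/-- A function is eventually constant if it is constant below some left threshold
and constant above some right threshold. -/
def EventuallyConstant (f : ℚ → ℚ) : Prop :=
  ∃ tl tr : ℚ, tl < tr ∧ (∀ x ≤ tl, f x = f tl) ∧ (∀ x ≥ tr, f x = f tr)

/-- The truncated ReLU. -/
def trReLU (x : ℚ) : ℚ := min (max x 0) 1

/-- The standard ReLU. -/
def ReLU (x : ℚ) : ℚ := max x 0

/-- The `ℓ`-spectrum of a GNN: all values of the `ℓ`-th feature map over all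
`n`-graphs and vertices. -/
def GNN.spectrum {n : ℕ} (A : GNN n) (ℓ : ℕ) : Set (Fin (A.d ℓ) → ℚ) :=
  { s | ∃ (G : NGraph n) (v : G.V), A.feat G ℓ v = s }

/-!
Induct on the layer. If the layer-`ℓ` spectrum is finite, the coefficients of layer `ℓ + 1`,
the entries of all layer-`ℓ` feature vectors and `1` generate a finitely generated
`ℤ`-submodule `N` of `ℚ`, and every pre-activation of layer `ℓ + 1` lies in `N * N`, which is
again finitely generated. A finitely generated subgroup of `ℚ` lies in `(1/D)ℤ` for a common
denominator `D`, so it meets every bounded interval in a finite set; an eventually constant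
activation is constant outside a bounded interval, hence takes finitely many values on it.
-/

open Set Submodule Matrix

lemma finite_span_singleton_inter_Icc {K : Type*} [Field K] [LinearOrder K]
    [IsStrictOrderedRing K] [FloorRing K] {x : K} (hx : 0 < x) (a b : K) :
    ((ℤ ∙ x : Set K) ∩ Icc a b).Finite := by
  refine ((finite_Icc ⌈a / x⌉ ⌊b / x⌋).image (· • x)).subset ?_
  rintro _ ⟨hq, ha, hb⟩
  obtain ⟨k, rfl⟩ := mem_span_singleton.1 hq
  rw [zsmul_eq_mul] at ha hb
  exact ⟨k, ⟨Int.ceil_le.2 ((div_le_iff₀ hx).2 ha), Int.le_floor.2 ((le_div_iff₀ hx).2 hb)⟩, rfl⟩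

lemma Submodule.FG.exists_le_span_inv_natCast {N : Submodule ℤ ℚ} (hN : N.FG) :
    ∃ D : ℕ, 0 < D ∧ N ≤ ℤ ∙ (D : ℚ)⁻¹ := by
  obtain ⟨s, rfl⟩ := hN
  have hD : 0 < ∏ q ∈ s, q.den := Finset.prod_pos fun q _ => q.pos
  refine ⟨_, hD, span_le.2 fun q hq => ?_⟩
  obtain ⟨m, hm⟩ := Finset.dvd_prod_of_mem Rat.den hq
  have hm0 : (m : ℚ) ≠ 0 := by exact_mod_cast (Nat.pos_of_mul_pos_left (hm ▸ hD)).ne'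
  refine mem_span_singleton.2 ⟨q.num * m, ?_⟩
  rw [hm, zsmul_eq_mul]
  push_cast
  field_simp
  rw [mul_comm]
  exact (Rat.mul_den_eq_num q).symm

lemma Submodule.FG.finite_inter_Icc {N : Submodule ℤ ℚ} (hN : N.FG) (a b : ℚ) :
    ((N : Set ℚ) ∩ Icc a b).Finite := by
  obtain ⟨D, hD, hND⟩ := hN.exists_le_span_inv_natCast
  exact (finite_span_singleton_inter_Icc (by positivity) a b).subset
    (inter_subset_inter_left _ hND)

lemma EventuallyConstant.finite_image {f : ℚ → ℚ} (hf : EventuallyConstant f) {S : Set ℚ}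
    (hS : ∀ a b, (S ∩ Icc a b).Finite) : (f '' S).Finite := by
  obtain ⟨tl, tr, -, hl, hr⟩ := hf
  refine (((hS tl tr).image f).insert (f tl) |>.insert (f tr)).subset ?_
  rintro _ ⟨q, hq, rfl⟩
  by_cases hqr : tr ≤ q
  · exact .inl (hr q hqr)
  by_cases hql : q ≤ tl
  · exact .inr (.inl (hl q hql))
  exact .inr (.inr ⟨q, ⟨hq, le_of_not_ge hql, le_of_not_ge hqr⟩, rfl⟩)

lemma Matrix.mulVec_apply_mem_mul {R A m n : Type*} [CommSemiring R] [Semiring A] [Algebra R A]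
    [Fintype n] {N P : Submodule R A} (M : Matrix m n A) (x : n → A)
    (hM : ∀ i j, M i j ∈ N) (hx : ∀ j, x j ∈ P) (i : m) : (M *ᵥ x) i ∈ N * P :=
  sum_mem fun j _ => mul_mem_mul (hM i j) (hx j)

namespace GNN

variable {n : ℕ} (A : GNN n)

def coeffs (ℓ : ℕ) : Set ℚ :=
  ⋃ i, insert (A.b ℓ i) (⋃ j, {A.C ℓ i j, A.Aout ℓ i j, A.Ain ℓ i j, A.R ℓ i j})

lemma finite_coeffs (ℓ : ℕ) : (A.coeffs ℓ).Finite :=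
  finite_iUnion fun _ => (finite_iUnion fun _ => toFinite _).insert _

lemma spectrum_zero_finite : (A.spectrum 0).Finite := by
  refine (Finite.pi fun _ => (finite_singleton (1 : ℚ)).insert 0).subset ?_
  rintro _ ⟨G, v, rfl⟩ i -
  simp only [feat]
  split <;> simp

/-- The hypothesis `1 ∈ N` puts the bias term `b = b * 1` into `N * N`. -/
lemma feat_succ_apply_mem_image {ℓ : ℕ} {N : Submodule ℤ ℚ} (h1 : 1 ∈ N)
    (hcoeffs : A.coeffs ℓ ⊆ N) {G : NGraph n} (hfeat : ∀ u j, A.feat G ℓ u j ∈ N)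
    (v : G.V) (i : Fin (A.d (ℓ + 1))) :
    A.feat G (ℓ + 1) v i ∈ A.act ℓ '' (N * N : Submodule ℤ ℚ) := by
  have hsum : ∀ (T : Finset G.V) j, (∑ u ∈ T, A.feat G ℓ u) j ∈ N := fun T j => by
    rw [Finset.sum_apply]
    exact sum_mem fun u _ => hfeat u j
  have hentry : ∀ i j, {A.C ℓ i j, A.Aout ℓ i j, A.Ain ℓ i j, A.R ℓ i j} ⊆ (N : Set ℚ) :=
    fun i j _ hq => hcoeffs (mem_iUnion.2 ⟨i, .inr (mem_iUnion.2 ⟨j, hq⟩)⟩)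
  refine ⟨_, add_mem (add_mem (add_mem (add_mem ?_ ?_) ?_) ?_) ?_, rfl⟩
  · exact Matrix.mulVec_apply_mem_mul _ _ (fun i j => hentry i j (by simp)) (hfeat v) i
  · exact Matrix.mulVec_apply_mem_mul _ _ (fun i j => hentry i j (by simp)) (hsum _) i
  · exact Matrix.mulVec_apply_mem_mul _ _ (fun i j => hentry i j (by simp)) (hsum _) i
  · exact Matrix.mulVec_apply_mem_mul _ _ (fun i j => hentry i j (by simp)) (hsum _) i
  · simpa using Submodule.mul_mem_mul (hcoeffs (mem_iUnion.2 ⟨i, mem_insert _ _⟩)) h1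

lemma spectrum_succ_finite {ℓ : ℕ} (hact : EventuallyConstant (A.act ℓ))
    (hspec : (A.spectrum ℓ).Finite) : (A.spectrum (ℓ + 1)).Finite := by
  set N := span ℤ (insert 1 (A.coeffs ℓ ∪ ⋃ s ∈ A.spectrum ℓ, range s))
  have hN : N.FG :=
    fg_span (((A.finite_coeffs ℓ).union (hspec.biUnion fun _ _ => toFinite _)).insert 1)
  refine (Finite.pi fun _ => hact.finite_image (hN.mul hN).finite_inter_Icc).subset ?_
  rintro _ ⟨G, v, rfl⟩ i -
  refine A.feat_succ_apply_mem_image (subset_span (mem_insert _ _))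
    (fun q hq => subset_span (.inr (.inl hq))) (fun u j => subset_span ?_) v i
  exact .inr (.inr (mem_biUnion ⟨G, u, rfl⟩ ⟨j, rfl⟩))

end GNN

/-- For every `n`-GNN all of whose activation functions are
eventually constant, and every layer `ℓ ≤ L`, the `ℓ`-spectrum is finite. -/
theorem spectrum_finite_of_eventuallyConstant {n : ℕ} (A : GNN n)
    (hec : ∀ ℓ < A.L, EventuallyConstant (A.act ℓ)) :
    ∀ ℓ ≤ A.L, (A.spectrum ℓ).Finite := by
  intro ℓ
  induction ℓ with
  | zero => exact fun _ => A.spectrum_zero_finite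
  | succ ℓ ih =>
    exact fun hℓ => A.spectrum_succ_finite (hec ℓ hℓ) (ih (Nat.le_of_succ_le hℓ))
end

section
/- For every local n-GNN A with L layers, every n-graph G, and every vertex v_r of G, the L-history of the root of the L-unravelling tree of G on v_r (computed with respect to A) equals the L-history of v_r in G. -/
set_option maxHeartbeats 1000000

/-- One step of a path: `(true, u)` means a forward edge to `u`, `(false, u)`
means a backward edge to `u`. -/
def stepOK {n : ℕ} (G : NGraph n) (a : G.V) (s : Bool × G.V) : Bool :=
  if s.1 then G.E a s.2 else G.E s.2 a

/-- `isPath G v p` holds if `p` is a valid path in `G` with source `v`. -/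
def isPath {n : ℕ} (G : NGraph n) : G.V → List (Bool × G.V) → Bool
  | _, [] => true
  | v, s :: rest => stepOK G v s && isPath G s.2 rest

/-- `isProper G v p` holds if the path has no contiguous subsequence of the
form `v ← u → v` or `v → u ← v`. -/
def isProper {n : ℕ} (G : NGraph n) : G.V → List (Bool × G.V) → Bool
  | _, [] => true
  | _, [_] => true
  | v, s1 :: s2 :: rest =>
      (!(decide (s2.2 = v) && decide (s1.1 ≠ s2.1))) &&
        isProper G s1.2 (s2 :: rest)

/-- The destination of a path with source `v`. -/
def pathDest {n : ℕ} (G : NGraph n) (v : G.V) (p : List (Bool × G.V)) : G.V :=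
  (p.map Prod.snd).getLastD v

/-- Vertices of the `L`-unravelling tree of `G` on `v0`: proper paths in `G`
with source `v0` and length at most `L`. -/
def UnravelV {n : ℕ} (G : NGraph n) (v0 : G.V) (L : ℕ) : Type :=
  {p : List (Bool × G.V) //
    p.length ≤ L ∧ isPath G v0 p = true ∧ isProper G v0 p = true}

noncomputable instance {n : ℕ} (G : NGraph n) (v0 : G.V) (L : ℕ) :
    Fintype (UnravelV G v0 L) :=
  @Fintype.ofFinite _
    (Set.Finite.to_subtype
      ((List.finite_length_le (Bool × G.V) L).subset fun _ hp => hp.1))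

instance {n : ℕ} (G : NGraph n) (v0 : G.V) (L : ℕ) :
    DecidableEq (UnravelV G v0 L) :=
  fun p q => decidable_of_iff (p.1 = q.1) Subtype.ext_iff.symm

/-- The `L`-unravelling tree of `G` on `v0`, as an `n`-graph. -/
noncomputable def unravel {n : ℕ} (G : NGraph n) (v0 : G.V) (L : ℕ) :
    NGraph n where
  V := UnravelV G v0 L
  nonemptyV := ⟨⟨[], Nat.zero_le _, rfl, rfl⟩⟩
  E := fun p q =>
    decide ((∃ u : G.V, q.1 = p.1 ++ [(true, u)]) ∨
      (∃ u : G.V, p.1 = q.1 ++ [(false, u)]))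
  U := fun c p => G.U c (pathDest G v0 p.1)

/-- The root of the unravelling tree: the empty path. -/
noncomputable def unravelRoot {n : ℕ} (G : NGraph n) (v0 : G.V) (L : ℕ) :
    (unravel G v0 L).V :=
  ⟨[], Nat.zero_le _, rfl, rfl⟩

/-- The `ℓ`-history of a vertex: the tuple of its feature vectors at layers
`0, …, ℓ`. -/
def GNN.hist {n : ℕ} (A : GNN n) (G : NGraph n) (ℓ : ℕ) (v : G.V) :
    (t : Fin (ℓ + 1)) → Fin (A.d t) → ℚ :=
  fun t => A.feat G t v

/-!
Write `stepOK G a (b, w)` for "`w` is a `b`-neighbour of `a`" (an out-neighbour for `b = true`,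
an in-neighbour for `b = false`); this reading applies verbatim to the unravelling tree. For a
path `p` of length `< L`, the `b`-neighbours of `p` in the tree are its one-step extensions by a
`b`-step and, if `p` ends with a `!b`-step, its parent; taking destinations maps them
bijectively onto the `b`-neighbours of the destination of `p` in `G`, and properness is exactly
what separates the parent from the children. A local GNN layer only aggregates over neighbours,
so by induction on `ℓ` the `ℓ`-th feature of a path `p` with `ℓ + |p| ≤ L` is the `ℓ`-th feature
of its destination in `G`. The root is the empty path, whose destination is `v₀`.
-/

section Paths

variable {n : ℕ} (G : NGraph n)

lemma stepOK_not (a c : G.V) (b : Bool) : stepOK G a (!b, c) = stepOK G c (b, a) := by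
  cases b <;> rfl

@[simp]
lemma pathDest_append_singleton (v : G.V) (p : List (Bool × G.V)) (s : Bool × G.V) :
    pathDest G v (p ++ [s]) = s.2 := by
  simp [pathDest]

lemma pathDest_cons (v : G.V) (s : Bool × G.V) (p : List (Bool × G.V)) :
    pathDest G v (s :: p) = pathDest G s.2 p := by
  simp only [pathDest, List.map_cons, List.getLastD_cons]

lemma isPath_append_singleton (v : G.V) (p : List (Bool × G.V)) (s : Bool × G.V) :
    isPath G v (p ++ [s]) = (isPath G v p && stepOK G (pathDest G v p) s) := by
  induction p generalizing v with
  | nil => simp [isPath, pathDest]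
  | cons hd tl ih => simp [isPath, ih, pathDest_cons, Bool.and_assoc]

lemma isProper_append_pair (v : G.V) (p : List (Bool × G.V)) (s₁ s₂ : Bool × G.V) :
    isProper G v (p ++ [s₁, s₂]) =
      (isProper G v (p ++ [s₁]) &&
        !(decide (s₂.2 = pathDest G v p) && decide (s₁.1 ≠ s₂.1))) := by
  induction p generalizing v with
  | nil => simp [isProper, pathDest, Bool.and_comm]
  | cons hd tl ih =>
    cases tl with
    | nil => simp [isProper, pathDest]
    | cons t tl =>
      simp only [List.cons_append] at ih ⊢
      simp [isProper, ih, pathDest_cons, Bool.and_assoc]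

lemma isProper_of_append_singleton {v : G.V} {p : List (Bool × G.V)} {s : Bool × G.V}
    (h : isProper G v (p ++ [s]) = true) : isProper G v p = true := by
  rcases List.eq_nil_or_concat' p with rfl | ⟨p, s₁, rfl⟩
  · rfl
  · rw [List.append_assoc, List.singleton_append, isProper_append_pair, Bool.and_eq_true] at h
    exact h.1

lemma pathDest_ne_of_isProper {v : G.V} {p : List (Bool × G.V)} {b : Bool} {u u' : G.V}
    (h : isProper G v (p ++ [(!b, u'), (b, u)]) = true) : u ≠ pathDest G v p := by
  rw [isProper_append_pair] at h
  cases b <;> simp_all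

lemma isProper_append_singleton {v : G.V} {p : List (Bool × G.V)} {b : Bool} {w : G.V}
    (hp : isProper G v p = true)
    (hback : ∀ p' x, p = p' ++ [(!b, x)] → w ≠ pathDest G v p') :
    isProper G v (p ++ [(b, w)]) = true := by
  rcases List.eq_nil_or_concat' p with rfl | ⟨p, ⟨b₁, x⟩, rfl⟩
  · rfl
  · rw [List.append_assoc, List.singleton_append, isProper_append_pair, hp]
    by_cases hb : b₁ = b
    · simp [hb]
    · have hb₁ : b₁ = !b := by cases b₁ <;> cases b <;> simp_all
      simpa [hb₁] using hback p x (by rw [hb₁])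

end Paths

section Unravelling

variable {n : ℕ} (G : NGraph n) (v0 : G.V) (L : ℕ)

lemma unravel_stepOK_iff (p q : (unravel G v0 L).V) (b : Bool) :
    stepOK (unravel G v0 L) p (b, q) = true ↔
      (∃ u, q.1 = p.1 ++ [(b, u)]) ∨ ∃ u, p.1 = q.1 ++ [(!b, u)] := by
  cases b <;> simp [stepOK, unravel, or_comm]

variable {G v0 L}

lemma length_le_of_unravel_stepOK {p q : (unravel G v0 L).V} {b : Bool}
    (h : stepOK (unravel G v0 L) p (b, q) = true) : q.1.length ≤ p.1.length + 1 := by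
  rcases (unravel_stepOK_iff G v0 L p q b).1 h with ⟨u, hu⟩ | ⟨u, hu⟩ <;>
    simp only [hu, List.length_append, List.length_singleton] <;> omega

lemma mapsTo_pathDest_unravel_stepOK (p : (unravel G v0 L).V) (b : Bool) :
    Set.MapsTo (fun q : (unravel G v0 L).V => pathDest G v0 q.1)
      {q | stepOK (unravel G v0 L) p (b, q) = true}
      {w | stepOK G (pathDest G v0 p.1) (b, w) = true} := by
  intro q hq
  rcases (unravel_stepOK_iff G v0 L p q b).1 hq with ⟨u, hu⟩ | ⟨u, hu⟩
  · have hpath := q.2.2.1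
    rw [hu, isPath_append_singleton, Bool.and_eq_true] at hpath
    simpa [hu] using hpath.2
  · have hpath := p.2.2.1
    rw [hu, isPath_append_singleton, Bool.and_eq_true, stepOK_not] at hpath
    simpa [hu] using hpath.2

lemma injOn_pathDest_unravel_stepOK (p : (unravel G v0 L).V) (b : Bool) :
    Set.InjOn (fun q : (unravel G v0 L).V => pathDest G v0 q.1)
      {q | stepOK (unravel G v0 L) p (b, q) = true} := by
  have child_ne_parent : ∀ q q' : (unravel G v0 L).V, (∃ u, q.1 = p.1 ++ [(b, u)]) →
      (∃ u, p.1 = q'.1 ++ [(!b, u)]) → pathDest G v0 q.1 ≠ pathDest G v0 q'.1 := by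
    rintro q q' ⟨u, hu⟩ ⟨u', hu'⟩
    have hprop := q.2.2.2
    rw [hu, hu', List.append_assoc, List.singleton_append] at hprop
    simpa [hu] using pathDest_ne_of_isProper G hprop
  intro q₁ hq₁ q₂ hq₂ (heq : pathDest G v0 q₁.1 = pathDest G v0 q₂.1)
  rcases (unravel_stepOK_iff G v0 L p q₁ b).1 hq₁ with ⟨u₁, hu₁⟩ | ⟨u₁, hu₁⟩ <;>
    rcases (unravel_stepOK_iff G v0 L p q₂ b).1 hq₂ with ⟨u₂, hu₂⟩ | ⟨u₂, hu₂⟩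
  · apply Subtype.ext
    simp_all
  · exact absurd heq (child_ne_parent _ _ ⟨_, hu₁⟩ ⟨_, hu₂⟩)
  · exact absurd heq.symm (child_ne_parent _ _ ⟨_, hu₂⟩ ⟨_, hu₁⟩)
  · rw [hu₁] at hu₂
    exact Subtype.ext (List.append_inj' hu₂ rfl).1

lemma surjOn_pathDest_unravel_stepOK (p : (unravel G v0 L).V) (hp : p.1.length < L)
    (b : Bool) :
    Set.SurjOn (fun q : (unravel G v0 L).V => pathDest G v0 q.1)
      {q | stepOK (unravel G v0 L) p (b, q) = true}
      {w | stepOK G (pathDest G v0 p.1) (b, w) = true} := by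
  intro w (hw : stepOK G (pathDest G v0 p.1) (b, w) = true)
  by_cases hback : ∃ p' x, p.1 = p' ++ [(!b, x)] ∧ w = pathDest G v0 p'
  · obtain ⟨p', x, hp', rfl⟩ := hback
    obtain ⟨hlen, hpath, hprop⟩ := p.2
    rw [hp'] at hlen hpath hprop
    rw [isPath_append_singleton, Bool.and_eq_true] at hpath
    refine ⟨⟨p', by simp at hlen; omega, hpath.1, isProper_of_append_singleton G hprop⟩,
      (unravel_stepOK_iff G v0 L _ _ b).2 (Or.inr ⟨x, hp'⟩), rfl⟩
  · simp only [not_exists, not_and] at hback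
    have hpath : isPath G v0 (p.1 ++ [(b, w)]) = true := by
      rw [isPath_append_singleton, p.2.2.1, hw]; rfl
    refine ⟨⟨p.1 ++ [(b, w)], by simp; omega, hpath,
        isProper_append_singleton G p.2.2.2 hback⟩,
      (unravel_stepOK_iff G v0 L _ _ b).2 (Or.inl ⟨w, rfl⟩), by simp⟩

lemma sum_unravel_stepOK {M : Type*} [AddCommMonoid M] (f : G.V → M)
    (p : (unravel G v0 L).V) (hp : p.1.length < L) (b : Bool) :
    ∑ q ∈ Finset.univ.filter (fun q => stepOK (unravel G v0 L) p (b, q)),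
        f (pathDest G v0 q.1)
      = ∑ w ∈ Finset.univ.filter (fun w => stepOK G (pathDest G v0 p.1) (b, w)), f w :=
  Finset.sum_nbij _
    (fun q hq => by simpa using mapsTo_pathDest_unravel_stepOK p b (by simpa using hq))
    (by simpa using injOn_pathDest_unravel_stepOK p b)
    (by simpa using surjOn_pathDest_unravel_stepOK p hp b) fun _ _ => rfl

end Unravelling

theorem feat_unravel_eq {n : ℕ} (A : GNN n) (G : NGraph n) (v0 : G.V) (L ℓ : ℕ)
    (hR : ∀ k < ℓ, A.R k = 0) (p : (unravel G v0 L).V) (hp : ℓ + p.1.length ≤ L) :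
    A.feat (unravel G v0 L) ℓ p = A.feat G ℓ (pathDest G v0 p.1) := by
  induction ℓ generalizing p with
  | zero => rfl
  | succ ℓ ih =>
    have ih' (q : (unravel G v0 L).V) (hq : ℓ + q.1.length ≤ L) :=
      ih (fun k hk => hR k (by omega)) q hq
    have hsum (b : Bool) :
        ∑ q ∈ Finset.univ.filter (fun q => stepOK (unravel G v0 L) p (b, q)),
            A.feat (unravel G v0 L) ℓ q
          = ∑ w ∈ Finset.univ.filter (fun w => stepOK G (pathDest G v0 p.1) (b, w)),
            A.feat G ℓ w := by
      rw [← sum_unravel_stepOK _ p (by omega) b]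
      refine Finset.sum_congr rfl fun q hq => ih' q ?_
      have := length_le_of_unravel_stepOK (Finset.mem_filter.1 hq).2
      omega
    have hout :
        ∑ q ∈ Finset.univ.filter (fun q => (unravel G v0 L).E p q),
            A.feat (unravel G v0 L) ℓ q
          = ∑ w ∈ Finset.univ.filter (fun w => G.E (pathDest G v0 p.1) w), A.feat G ℓ w :=
      hsum true
    have hin :
        ∑ q ∈ Finset.univ.filter (fun q => (unravel G v0 L).E q p),
            A.feat (unravel G v0 L) ℓ q
          = ∑ w ∈ Finset.univ.filter (fun w => G.E w (pathDest G v0 p.1)), A.feat G ℓ w :=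
      hsum false
    funext i
    simp only [GNN.feat]
    rw [ih' p (by omega), hout, hin, hR ℓ (by omega), Matrix.zero_mulVec, Matrix.zero_mulVec]

/-- For every local `n`-GNN with `L` layers, every `n`-graph
`G`, and every vertex `v₀` of `G`, the `L`-history of the root of the
`L`-unravelling tree of `G` on `v₀` equals the `L`-history of `v₀` in `G`. -/
theorem unravelling_preserves_history {n : ℕ} (A : GNN n) (hloc : A.IsLocal)
    (G : NGraph n) (v0 : G.V) :
    A.hist (unravel G v0 A.L) A.L (unravelRoot G v0 A.L) = A.hist G A.L v0 := by
  funext t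
  exact feat_unravel_eq A G v0 A.L t (fun k hk => hloc k (by omega)) (unravelRoot G v0 A.L)
    (Nat.lt_succ_iff.mp t.isLt)
end

section
/- For every 2-GNN A with eventually constant activation functions and zero global-readout matrices (a local C-GNN), there exists a threshold n_A ∈ ℕ such that for all n₁, n₂ ≥ n_A, letting G be the (n_A, n_A)-bipolar graph and G′ the (n₁, n₂)-bipolar graph, for every layer 0 ≤ ℓ ≤ L: (1) ξ⁽ℓ⁾_G(v₀) = ξ⁽ℓ⁾_{G′}(v′₀), ξ⁽ℓ⁾_G(v₁) = ξ⁽ℓ⁾_{G′}(v′₁), and ξ⁽ℓ⁾_G(v₂) = ξ⁽ℓ⁾_{G′}(v′₂); (2) ξ⁽ℓ⁾_G(v_{1,i}) = ξ⁽ℓ⁾_{G′}(v′_{1,i'}) for all 1 ≤ i ≤ n_A, 1 ≤ i' ≤ n₁; (3) ξ⁽ℓ⁾_G(v_{2,i}) = ξ⁽ℓ⁾_{G′}(v′_{2,i'}) for all 1 ≤ i ≤ n_A, 1 ≤ i' ≤ n₂. -/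
set_option maxHeartbeats 1000000

/-- The vertex type of a bipolar graph: `v₀, v₁, v₂` and the vertices
`v_{1,i}` (`i < n₁`) and `v_{2,i}` (`i < n₂`). -/
abbrev BipolarV (n1 n2 : ℕ) : Type := Fin 3 ⊕ (Fin n1 ⊕ Fin n2)

/-- The `(n₁,n₂)`-bipolar graph: edges `(v₀,v₁)`, `(v₀,v₂)`,
`(v₁,v_{1,i})`, `(v₂,v_{2,i})`; color `U₁` consists of the `v_{1,i}` and
color `U₂` of the `v_{2,i}`. -/
def bipolar (n1 n2 : ℕ) : NGraph 2 where
  V := BipolarV n1 n2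
  nonemptyV := ⟨Sum.inl 0⟩
  E := fun a b =>
    match a, b with
    | Sum.inl ⟨0, _⟩, Sum.inl ⟨1, _⟩ => true
    | Sum.inl ⟨0, _⟩, Sum.inl ⟨2, _⟩ => true
    | Sum.inl ⟨1, _⟩, Sum.inr (Sum.inl _) => true
    | Sum.inl ⟨2, _⟩, Sum.inr (Sum.inr _) => true
    | _, _ => false
  U := fun c v =>
    match c, v with
    | ⟨0, _⟩, Sum.inr (Sum.inl _) => true
    | ⟨1, _⟩, Sum.inr (Sum.inr _) => true
    | _, _ => false

section Aux
variable {M : Type*} [AddCommMonoid M]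

private lemma sum_out_v0 (n1 n2 : ℕ) (f : (bipolar n1 n2).V → M) :
    (∑ u ∈ Finset.univ.filter (fun u => (bipolar n1 n2).E (Sum.inl 0) u), f u)
      = f (Sum.inl 1) + f (Sum.inl 2) := by
  rw [Finset.sum_filter]
  show ∑ a : BipolarV n1 n2, (if (bipolar n1 n2).E (Sum.inl 0) a = true then f a else 0) = _
  rw [Fintype.sum_sum_type, Fintype.sum_sum_type, Fin.sum_univ_three]
  have h0 : ∀ i : Fin n1, (bipolar n1 n2).E (Sum.inl 0) (Sum.inr (Sum.inl i)) = false := fun _ => rfl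
  have h1 : ∀ i : Fin n2, (bipolar n1 n2).E (Sum.inl 0) (Sum.inr (Sum.inr i)) = false := fun _ => rfl
  simp [h0, h1, show (bipolar n1 n2).E (Sum.inl 0) (Sum.inl 0) = false from rfl,
    show (bipolar n1 n2).E (Sum.inl 0) (Sum.inl 1) = true from rfl,
    show (bipolar n1 n2).E (Sum.inl 0) (Sum.inl 2) = true from rfl]

private lemma sum_out_v1 (n1 n2 : ℕ) (f : (bipolar n1 n2).V → M) :
    (∑ u ∈ Finset.univ.filter (fun u => (bipolar n1 n2).E (Sum.inl 1) u), f u)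
      = ∑ i : Fin n1, f (Sum.inr (Sum.inl i)) := by
  rw [Finset.sum_filter]
  show ∑ a : BipolarV n1 n2, (if (bipolar n1 n2).E (Sum.inl 1) a = true then f a else 0) = _
  rw [Fintype.sum_sum_type, Fintype.sum_sum_type, Fin.sum_univ_three]
  have h0 : ∀ i : Fin n1, (bipolar n1 n2).E (Sum.inl 1) (Sum.inr (Sum.inl i)) = true := fun _ => rfl
  have h1 : ∀ i : Fin n2, (bipolar n1 n2).E (Sum.inl 1) (Sum.inr (Sum.inr i)) = false := fun _ => rfl
  simp [h0, h1, show (bipolar n1 n2).E (Sum.inl 1) (Sum.inl 0) = false from rfl,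
    show (bipolar n1 n2).E (Sum.inl 1) (Sum.inl 1) = false from rfl,
    show (bipolar n1 n2).E (Sum.inl 1) (Sum.inl 2) = false from rfl]

private lemma sum_out_v2 (n1 n2 : ℕ) (f : (bipolar n1 n2).V → M) :
    (∑ u ∈ Finset.univ.filter (fun u => (bipolar n1 n2).E (Sum.inl 2) u), f u)
      = ∑ i : Fin n2, f (Sum.inr (Sum.inr i)) := by
  rw [Finset.sum_filter]
  show ∑ a : BipolarV n1 n2, (if (bipolar n1 n2).E (Sum.inl 2) a = true then f a else 0) = _
  rw [Fintype.sum_sum_type, Fintype.sum_sum_type, Fin.sum_univ_three]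
  have h0 : ∀ i : Fin n1, (bipolar n1 n2).E (Sum.inl 2) (Sum.inr (Sum.inl i)) = false := fun _ => rfl
  have h1 : ∀ i : Fin n2, (bipolar n1 n2).E (Sum.inl 2) (Sum.inr (Sum.inr i)) = true := fun _ => rfl
  simp [h0, h1, show (bipolar n1 n2).E (Sum.inl 2) (Sum.inl 0) = false from rfl,
    show (bipolar n1 n2).E (Sum.inl 2) (Sum.inl 1) = false from rfl,
    show (bipolar n1 n2).E (Sum.inl 2) (Sum.inl 2) = false from rfl]

private lemma sum_out_leaf (n1 n2 : ℕ) (x : Fin n1 ⊕ Fin n2) (f : (bipolar n1 n2).V → M) :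
    (∑ u ∈ Finset.univ.filter (fun u => (bipolar n1 n2).E (Sum.inr x) u), f u) = 0 := by
  rw [Finset.sum_filter]
  have h : ∀ a : BipolarV n1 n2, (bipolar n1 n2).E (Sum.inr x) a = false := by
    rintro (j | (i | i)) <;> rcases x with i' | i' <;> rfl
  show ∑ a : BipolarV n1 n2, (if (bipolar n1 n2).E (Sum.inr x) a = true then f a else 0) = _
  simp [h]

private lemma sum_in_v0 (n1 n2 : ℕ) (f : (bipolar n1 n2).V → M) :
    (∑ u ∈ Finset.univ.filter (fun u => (bipolar n1 n2).E u (Sum.inl 0)), f u) = 0 := by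
  rw [Finset.sum_filter]
  have h : ∀ a : BipolarV n1 n2, (bipolar n1 n2).E a (Sum.inl 0) = false := by
    rintro (⟨(_|_|_|_), hj⟩ | (i | i)) <;> rfl
  show ∑ a : BipolarV n1 n2, (if (bipolar n1 n2).E a (Sum.inl 0) = true then f a else 0) = _
  simp [h]
end Aux

section Aux2
variable {M : Type*} [AddCommMonoid M]

private lemma sum_in_v1 (n1 n2 : ℕ) (f : (bipolar n1 n2).V → M) :
    (∑ u ∈ Finset.univ.filter (fun u => (bipolar n1 n2).E u (Sum.inl 1)), f u)
      = f (Sum.inl 0) := by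
  rw [Finset.sum_filter]
  show ∑ a : BipolarV n1 n2, (if (bipolar n1 n2).E a (Sum.inl 1) = true then f a else 0) = _
  rw [Fintype.sum_sum_type, Fintype.sum_sum_type, Fin.sum_univ_three]
  have h0 : ∀ i : Fin n1, (bipolar n1 n2).E (Sum.inr (Sum.inl i)) (Sum.inl 1) = false := fun _ => rfl
  have h1 : ∀ i : Fin n2, (bipolar n1 n2).E (Sum.inr (Sum.inr i)) (Sum.inl 1) = false := fun _ => rfl
  simp [h0, h1, show (bipolar n1 n2).E (Sum.inl 0) (Sum.inl 1) = true from rfl,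
    show (bipolar n1 n2).E (Sum.inl 1) (Sum.inl 1) = false from rfl,
    show (bipolar n1 n2).E (Sum.inl 2) (Sum.inl 1) = false from rfl]

private lemma sum_in_v2 (n1 n2 : ℕ) (f : (bipolar n1 n2).V → M) :
    (∑ u ∈ Finset.univ.filter (fun u => (bipolar n1 n2).E u (Sum.inl 2)), f u)
      = f (Sum.inl 0) := by
  rw [Finset.sum_filter]
  show ∑ a : BipolarV n1 n2, (if (bipolar n1 n2).E a (Sum.inl 2) = true then f a else 0) = _
  rw [Fintype.sum_sum_type, Fintype.sum_sum_type, Fin.sum_univ_three]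
  have h0 : ∀ i : Fin n1, (bipolar n1 n2).E (Sum.inr (Sum.inl i)) (Sum.inl 2) = false := fun _ => rfl
  have h1 : ∀ i : Fin n2, (bipolar n1 n2).E (Sum.inr (Sum.inr i)) (Sum.inl 2) = false := fun _ => rfl
  simp [h0, h1, show (bipolar n1 n2).E (Sum.inl 0) (Sum.inl 2) = true from rfl,
    show (bipolar n1 n2).E (Sum.inl 1) (Sum.inl 2) = false from rfl,
    show (bipolar n1 n2).E (Sum.inl 2) (Sum.inl 2) = false from rfl]

private lemma sum_in_leaf1 (n1 n2 : ℕ) (i : Fin n1) (f : (bipolar n1 n2).V → M) :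
    (∑ u ∈ Finset.univ.filter (fun u => (bipolar n1 n2).E u (Sum.inr (Sum.inl i))), f u)
      = f (Sum.inl 1) := by
  rw [Finset.sum_filter]
  show ∑ a : BipolarV n1 n2, (if (bipolar n1 n2).E a (Sum.inr (Sum.inl i)) = true then f a else 0) = _
  rw [Fintype.sum_sum_type, Fintype.sum_sum_type, Fin.sum_univ_three]
  have h0 : ∀ j : Fin n1, (bipolar n1 n2).E (Sum.inr (Sum.inl j)) (Sum.inr (Sum.inl i)) = false := fun _ => rfl
  have h1 : ∀ j : Fin n2, (bipolar n1 n2).E (Sum.inr (Sum.inr j)) (Sum.inr (Sum.inl i)) = false := fun _ => rfl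
  simp [h0, h1, show (bipolar n1 n2).E (Sum.inl 0) (Sum.inr (Sum.inl i)) = false from rfl,
    show (bipolar n1 n2).E (Sum.inl 1) (Sum.inr (Sum.inl i)) = true from rfl,
    show (bipolar n1 n2).E (Sum.inl 2) (Sum.inr (Sum.inl i)) = false from rfl]

private lemma sum_in_leaf2 (n1 n2 : ℕ) (i : Fin n2) (f : (bipolar n1 n2).V → M) :
    (∑ u ∈ Finset.univ.filter (fun u => (bipolar n1 n2).E u (Sum.inr (Sum.inr i))), f u)
      = f (Sum.inl 2) := by
  rw [Finset.sum_filter]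
  show ∑ a : BipolarV n1 n2, (if (bipolar n1 n2).E a (Sum.inr (Sum.inr i)) = true then f a else 0) = _
  rw [Fintype.sum_sum_type, Fintype.sum_sum_type, Fin.sum_univ_three]
  have h0 : ∀ j : Fin n1, (bipolar n1 n2).E (Sum.inr (Sum.inl j)) (Sum.inr (Sum.inr i)) = false := fun _ => rfl
  have h1 : ∀ j : Fin n2, (bipolar n1 n2).E (Sum.inr (Sum.inr j)) (Sum.inr (Sum.inr i)) = false := fun _ => rfl
  simp [h0, h1, show (bipolar n1 n2).E (Sum.inl 0) (Sum.inr (Sum.inr i)) = false from rfl,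
    show (bipolar n1 n2).E (Sum.inl 1) (Sum.inr (Sum.inr i)) = false from rfl,
    show (bipolar n1 n2).E (Sum.inl 2) (Sum.inr (Sum.inr i)) = true from rfl]

private lemma bp_U_inl (n1 n2 : ℕ) (c : Fin 2) (j : Fin 3) :
    (bipolar n1 n2).U c (Sum.inl j) = false := by fin_cases c <;> rfl

private lemma bp_U_l1 (n1 n2 m1 m2 : ℕ) (c : Fin 2) (i : Fin n1) (i' : Fin m1) :
    (bipolar n1 n2).U c (Sum.inr (Sum.inl i)) = (bipolar m1 m2).U c (Sum.inr (Sum.inl i')) := by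
  fin_cases c <;> rfl

private lemma bp_U_l2 (n1 n2 m1 m2 : ℕ) (c : Fin 2) (i : Fin n2) (i' : Fin m2) :
    (bipolar n1 n2).U c (Sum.inr (Sum.inr i)) = (bipolar m1 m2).U c (Sum.inr (Sum.inr i')) := by
  fin_cases c <;> rfl

end Aux2

private lemma stab1 (f : ℚ → ℚ) (hf : EventuallyConstant f) (α β : ℚ) :
    ∃ N : ℕ, ∀ n m : ℕ, N ≤ n → N ≤ m → f (α + n * β) = f (α + m * β) := by
  obtain ⟨tl, tr, _, hl, hr⟩ := hf
  rcases lt_trichotomy β 0 with hβ | hβ | hβ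
  · obtain ⟨N, hN⟩ := exists_nat_ge ((tl - α) / β)
    refine ⟨N, fun n m hn hm => ?_⟩
    have key : ∀ k : ℕ, N ≤ k → α + k * β ≤ tl := by
      intro k hk
      have h1 : ((tl - α)/β) ≤ (k : ℚ) := hN.trans (by exact_mod_cast hk)
      have := (div_le_iff_of_neg hβ).mp h1
      linarith
    rw [hl _ (key n hn), hl _ (key m hm)]
  · simp [hβ]
  · obtain ⟨N, hN⟩ := exists_nat_ge ((tr - α) / β)
    refine ⟨N, fun n m hn hm => ?_⟩
    have key : ∀ k : ℕ, N ≤ k → tr ≤ α + k * β := by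
      intro k hk
      have h1 : ((tr - α)/β) ≤ (k : ℚ) := hN.trans (by exact_mod_cast hk)
      have := (div_le_iff₀ hβ).mp h1
      linarith
    rw [hr _ (key n hn), hr _ (key m hm)]

private lemma stabVec {d : ℕ} (f : ℚ → ℚ) (hf : EventuallyConstant f) (α β : Fin d → ℚ) :
    ∃ N : ℕ, ∀ n m : ℕ, N ≤ n → N ≤ m → ∀ i, f (α i + n * β i) = f (α i + m * β i) := by
  choose Ns hNs using fun i => stab1 f hf (α i) (β i)
  refine ⟨Finset.univ.sup Ns, fun n m hn hm i => hNs i n m ?_ ?_⟩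
  · exact le_trans (Finset.le_sup (Finset.mem_univ i)) hn
  · exact le_trans (Finset.le_sup (Finset.mem_univ i)) hm

private lemma feat_succ_v0 (A : GNN 2) (ℓ n1 n2 : ℕ) (hR : A.R ℓ = 0) :
    A.feat (bipolar n1 n2) (ℓ+1) (Sum.inl 0) = fun i => A.act ℓ
      ((A.C ℓ).mulVec (A.feat (bipolar n1 n2) ℓ (Sum.inl 0)) i
        + (A.Aout ℓ).mulVec (A.feat (bipolar n1 n2) ℓ (Sum.inl 1)
            + A.feat (bipolar n1 n2) ℓ (Sum.inl 2)) i
        + A.b ℓ i) := by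
  funext i
  simp only [GNN.feat]
  rw [sum_out_v0, sum_in_v0, hR]
  simp [Matrix.zero_mulVec, Matrix.mulVec_zero]

private lemma feat_succ_v1 (A : GNN 2) (ℓ n1 n2 : ℕ) (hR : A.R ℓ = 0) :
    A.feat (bipolar n1 n2) (ℓ+1) (Sum.inl 1) = fun i => A.act ℓ
      ((A.C ℓ).mulVec (A.feat (bipolar n1 n2) ℓ (Sum.inl 1)) i
        + (A.Aout ℓ).mulVec (∑ j : Fin n1, A.feat (bipolar n1 n2) ℓ (Sum.inr (Sum.inl j))) i
        + (A.Ain ℓ).mulVec (A.feat (bipolar n1 n2) ℓ (Sum.inl 0)) i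
        + A.b ℓ i) := by
  funext i
  simp only [GNN.feat]
  rw [sum_out_v1, sum_in_v1, hR]
  simp [Matrix.zero_mulVec]

private lemma feat_succ_v2 (A : GNN 2) (ℓ n1 n2 : ℕ) (hR : A.R ℓ = 0) :
    A.feat (bipolar n1 n2) (ℓ+1) (Sum.inl 2) = fun i => A.act ℓ
      ((A.C ℓ).mulVec (A.feat (bipolar n1 n2) ℓ (Sum.inl 2)) i
        + (A.Aout ℓ).mulVec (∑ j : Fin n2, A.feat (bipolar n1 n2) ℓ (Sum.inr (Sum.inr j))) i
        + (A.Ain ℓ).mulVec (A.feat (bipolar n1 n2) ℓ (Sum.inl 0)) i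
        + A.b ℓ i) := by
  funext i
  simp only [GNN.feat]
  rw [sum_out_v2, sum_in_v2, hR]
  simp [Matrix.zero_mulVec]

private lemma feat_succ_l1 (A : GNN 2) (ℓ n1 n2 : ℕ) (j : Fin n1) (hR : A.R ℓ = 0) :
    A.feat (bipolar n1 n2) (ℓ+1) (Sum.inr (Sum.inl j)) = fun i => A.act ℓ
      ((A.C ℓ).mulVec (A.feat (bipolar n1 n2) ℓ (Sum.inr (Sum.inl j))) i
        + (A.Ain ℓ).mulVec (A.feat (bipolar n1 n2) ℓ (Sum.inl 1)) i
        + A.b ℓ i) := by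
  funext i
  simp only [GNN.feat]
  rw [sum_out_leaf, sum_in_leaf1, hR]
  simp [Matrix.zero_mulVec, Matrix.mulVec_zero]

private lemma feat_succ_l2 (A : GNN 2) (ℓ n1 n2 : ℕ) (j : Fin n2) (hR : A.R ℓ = 0) :
    A.feat (bipolar n1 n2) (ℓ+1) (Sum.inr (Sum.inr j)) = fun i => A.act ℓ
      ((A.C ℓ).mulVec (A.feat (bipolar n1 n2) ℓ (Sum.inr (Sum.inr j))) i
        + (A.Ain ℓ).mulVec (A.feat (bipolar n1 n2) ℓ (Sum.inl 2)) i
        + A.b ℓ i) := by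
  funext i
  simp only [GNN.feat]
  rw [sum_out_leaf, sum_in_leaf2, hR]
  simp [Matrix.zero_mulVec, Matrix.mulVec_zero]

private lemma feat_zero_eq (A : GNN 2) (n1 n2 m1 m2 : ℕ) :
    (A.feat (bipolar n1 n2) 0 (Sum.inl 0) = A.feat (bipolar m1 m2) 0 (Sum.inl 0)) ∧
    (A.feat (bipolar n1 n2) 0 (Sum.inl 1) = A.feat (bipolar m1 m2) 0 (Sum.inl 1)) ∧
    (A.feat (bipolar n1 n2) 0 (Sum.inl 2) = A.feat (bipolar m1 m2) 0 (Sum.inl 2)) ∧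
    (∀ (i : Fin n1) (i' : Fin m1),
      A.feat (bipolar n1 n2) 0 (Sum.inr (Sum.inl i)) = A.feat (bipolar m1 m2) 0 (Sum.inr (Sum.inl i'))) ∧
    (∀ (i : Fin n2) (i' : Fin m2),
      A.feat (bipolar n1 n2) 0 (Sum.inr (Sum.inr i)) = A.feat (bipolar m1 m2) 0 (Sum.inr (Sum.inr i'))) := by
  refine ⟨?_, ?_, ?_, fun i i' => ?_, fun i i' => ?_⟩ <;> funext k <;> simp only [GNN.feat]
  · rw [bp_U_inl, bp_U_inl]
  · rw [bp_U_inl, bp_U_inl]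
  · rw [bp_U_inl, bp_U_inl]
  · rw [bp_U_l1 n1 n2 m1 m2 _ i i']
  · rw [bp_U_l2 n1 n2 m1 m2 _ i i']

private def Stable (A : GNN 2) (ℓ N : ℕ) : Prop :=
  ∀ n1 n2 m1 m2 : ℕ, N ≤ n1 → N ≤ n2 → N ≤ m1 → N ≤ m2 → ∀ k ≤ ℓ,
    (A.feat (bipolar n1 n2) k (Sum.inl 0) = A.feat (bipolar m1 m2) k (Sum.inl 0)) ∧
    (A.feat (bipolar n1 n2) k (Sum.inl 1) = A.feat (bipolar m1 m2) k (Sum.inl 1)) ∧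
    (A.feat (bipolar n1 n2) k (Sum.inl 2) = A.feat (bipolar m1 m2) k (Sum.inl 2)) ∧
    (∀ (i : Fin n1) (i' : Fin m1),
      A.feat (bipolar n1 n2) k (Sum.inr (Sum.inl i)) = A.feat (bipolar m1 m2) k (Sum.inr (Sum.inl i'))) ∧
    (∀ (i : Fin n2) (i' : Fin m2),
      A.feat (bipolar n1 n2) k (Sum.inr (Sum.inr i)) = A.feat (bipolar m1 m2) k (Sum.inr (Sum.inr i')))

private lemma stable_all (A : GNN 2) (hloc : A.IsLocal)
    (hec : ∀ ℓ < A.L, EventuallyConstant (A.act ℓ)) :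
    ∀ ℓ ≤ A.L, ∃ N, Stable A ℓ N := by
  intro ℓ hℓ
  induction ℓ with
  | zero =>
    refine ⟨0, fun n1 n2 m1 m2 _ _ _ _ k hk => ?_⟩
    interval_cases k
    exact feat_zero_eq A n1 n2 m1 m2
  | succ ℓ ih =>
    have hℓ' : ℓ < A.L := hℓ
    obtain ⟨N₀, h₀⟩ := ih (le_of_lt hℓ')
    have hR : A.R ℓ = 0 := hloc ℓ hℓ'
    set G₀ := bipolar (N₀+1) (N₀+1) with hG₀
    set gv0 := A.feat G₀ ℓ (Sum.inl 0) with hgv0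
    set gv1 := A.feat G₀ ℓ (Sum.inl 1) with hgv1
    set gv2 := A.feat G₀ ℓ (Sum.inl 2) with hgv2
    set gl1 := A.feat G₀ ℓ (Sum.inr (Sum.inl ⟨0, N₀.succ_pos⟩)) with hgl1
    set gl2 := A.feat G₀ ℓ (Sum.inr (Sum.inr ⟨0, N₀.succ_pos⟩)) with hgl2
    have hstab : ∀ n1 n2 : ℕ, N₀ ≤ n1 → N₀ ≤ n2 →
        (A.feat (bipolar n1 n2) ℓ (Sum.inl 0) = gv0) ∧
        (A.feat (bipolar n1 n2) ℓ (Sum.inl 1) = gv1) ∧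
        (A.feat (bipolar n1 n2) ℓ (Sum.inl 2) = gv2) ∧
        (∀ i : Fin n1, A.feat (bipolar n1 n2) ℓ (Sum.inr (Sum.inl i)) = gl1) ∧
        (∀ i : Fin n2, A.feat (bipolar n1 n2) ℓ (Sum.inr (Sum.inr i)) = gl2) := by
      intro n1 n2 h1 h2
      obtain ⟨a, b, c, d, e⟩ :=
        h₀ n1 n2 (N₀+1) (N₀+1) h1 h2 (Nat.le_succ _) (Nat.le_succ _) ℓ le_rfl
      exact ⟨a, b, c, fun i => d i ⟨0, N₀.succ_pos⟩, fun i => e i ⟨0, N₀.succ_pos⟩⟩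
    obtain ⟨N₁, hN₁⟩ := stabVec (A.act ℓ) (hec ℓ hℓ')
      (fun i => (A.C ℓ).mulVec gv1 i + (A.Ain ℓ).mulVec gv0 i + A.b ℓ i)
      (fun i => (A.Aout ℓ).mulVec gl1 i)
    obtain ⟨N₂, hN₂⟩ := stabVec (A.act ℓ) (hec ℓ hℓ')
      (fun i => (A.C ℓ).mulVec gv2 i + (A.Ain ℓ).mulVec gv0 i + A.b ℓ i)
      (fun i => (A.Aout ℓ).mulVec gl2 i)
    refine ⟨max (N₀+1) (max N₁ N₂), ?_⟩
    set N := max (N₀+1) (max N₁ N₂) with hN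
    have hA : N₀ + 1 ≤ N := le_max_left _ _
    have hB : N₁ ≤ N := le_trans (le_max_left _ _) (le_max_right _ _)
    have hC : N₂ ≤ N := le_trans (le_max_right _ _) (le_max_right _ _)
    have key : ∀ n1 n2 : ℕ, N ≤ n1 → N ≤ n2 →
        (A.feat (bipolar n1 n2) (ℓ+1) (Sum.inl 0) = fun i => A.act ℓ
          ((A.C ℓ).mulVec gv0 i + (A.Aout ℓ).mulVec (gv1 + gv2) i + A.b ℓ i)) ∧
        (A.feat (bipolar n1 n2) (ℓ+1) (Sum.inl 1) = fun i => A.act ℓ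
          (((A.C ℓ).mulVec gv1 i + (A.Ain ℓ).mulVec gv0 i + A.b ℓ i)
            + (n1 : ℚ) * (A.Aout ℓ).mulVec gl1 i)) ∧
        (A.feat (bipolar n1 n2) (ℓ+1) (Sum.inl 2) = fun i => A.act ℓ
          (((A.C ℓ).mulVec gv2 i + (A.Ain ℓ).mulVec gv0 i + A.b ℓ i)
            + (n2 : ℚ) * (A.Aout ℓ).mulVec gl2 i)) ∧
        (∀ i : Fin n1, A.feat (bipolar n1 n2) (ℓ+1) (Sum.inr (Sum.inl i)) = fun j => A.act ℓ
          ((A.C ℓ).mulVec gl1 j + (A.Ain ℓ).mulVec gv1 j + A.b ℓ j)) ∧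
        (∀ i : Fin n2, A.feat (bipolar n1 n2) (ℓ+1) (Sum.inr (Sum.inr i)) = fun j => A.act ℓ
          ((A.C ℓ).mulVec gl2 j + (A.Ain ℓ).mulVec gv2 j + A.b ℓ j)) := by
      intro n1 n2 hn1 hn2
      have h1 : N₀ ≤ n1 := le_trans (Nat.le_of_succ_le hA) hn1
      have h2 : N₀ ≤ n2 := le_trans (Nat.le_of_succ_le hA) hn2
      obtain ⟨hv0, hv1, hv2, hl1, hl2⟩ := hstab n1 n2 h1 h2
      have hsum1 : (∑ j : Fin n1, A.feat (bipolar n1 n2) ℓ (Sum.inr (Sum.inl j)))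
          = (n1 : ℚ) • gl1 := by
        rw [Finset.sum_congr rfl (fun j _ => hl1 j), Finset.sum_const, Finset.card_univ,
          Fintype.card_fin, Nat.cast_smul_eq_nsmul]
      have hsum2 : (∑ j : Fin n2, A.feat (bipolar n1 n2) ℓ (Sum.inr (Sum.inr j)))
          = (n2 : ℚ) • gl2 := by
        rw [Finset.sum_congr rfl (fun j _ => hl2 j), Finset.sum_const, Finset.card_univ,
          Fintype.card_fin, Nat.cast_smul_eq_nsmul]
      refine ⟨?_, ?_, ?_, fun i => ?_, fun i => ?_⟩
      · rw [feat_succ_v0 A ℓ n1 n2 hR, hv0, hv1, hv2]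
      · rw [feat_succ_v1 A ℓ n1 n2 hR, hv1, hv0]
        funext i
        congr 1
        rw [hsum1, Matrix.mulVec_smul, Pi.smul_apply, smul_eq_mul]
        ring
      · rw [feat_succ_v2 A ℓ n1 n2 hR, hv2, hv0]
        funext i
        congr 1
        rw [hsum2, Matrix.mulVec_smul, Pi.smul_apply, smul_eq_mul]
        ring
      · rw [feat_succ_l1 A ℓ n1 n2 i hR, hv1, hl1 i]
      · rw [feat_succ_l2 A ℓ n1 n2 i hR, hv2, hl2 i]
    intro n1 n2 m1 m2 hn1 hn2 hm1 hm2 k hk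
    rcases eq_or_lt_of_le hk with heq | hlt
    · subst heq
      obtain ⟨k0n, k1n, k2n, kl1n, kl2n⟩ := key n1 n2 hn1 hn2
      obtain ⟨k0m, k1m, k2m, kl1m, kl2m⟩ := key m1 m2 hm1 hm2
      refine ⟨?_, ?_, ?_, fun i i' => ?_, fun i i' => ?_⟩
      · rw [k0n, k0m]
      · rw [k1n, k1m]
        funext i
        exact hN₁ n1 m1 (le_trans hB hn1) (le_trans hB hm1) i
      · rw [k2n, k2m]
        funext i
        exact hN₂ n2 m2 (le_trans hC hn2) (le_trans hC hm2) i
      · rw [kl1n i, kl1m i']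
      · rw [kl2n i, kl2m i']
    · exact h₀ n1 n2 m1 m2 (le_trans (Nat.le_of_succ_le hA) hn1)
        (le_trans (Nat.le_of_succ_le hA) hn2) (le_trans (Nat.le_of_succ_le hA) hm1)
        (le_trans (Nat.le_of_succ_le hA) hm2) k (Nat.lt_succ_iff.mp hlt)

/-- For every local 2-GNN with eventually constant
activations there is a threshold `N` such that for all `n₁, n₂ ≥ N` the GNN
computes, at every layer `ℓ ≤ L`, the same features on `v₀, v₁, v₂` (resp. on
the `v_{1,i}`, resp. on the `v_{2,i}`) in the `(N,N)`-bipolar graph and in the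
`(n₁,n₂)`-bipolar graph. -/
theorem bipolar_indistinguishable (A : GNN 2) (hloc : A.IsLocal)
    (hec : ∀ ℓ < A.L, EventuallyConstant (A.act ℓ)) :
    ∃ N : ℕ, ∀ n1 n2 : ℕ, N ≤ n1 → N ≤ n2 → ∀ ℓ ≤ A.L,
      (A.feat (bipolar N N) ℓ (Sum.inl 0) = A.feat (bipolar n1 n2) ℓ (Sum.inl 0)) ∧
      (A.feat (bipolar N N) ℓ (Sum.inl 1) = A.feat (bipolar n1 n2) ℓ (Sum.inl 1)) ∧
      (A.feat (bipolar N N) ℓ (Sum.inl 2) = A.feat (bipolar n1 n2) ℓ (Sum.inl 2)) ∧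
      (∀ (i : Fin N) (i' : Fin n1),
        A.feat (bipolar N N) ℓ (Sum.inr (Sum.inl i)) =
          A.feat (bipolar n1 n2) ℓ (Sum.inr (Sum.inl i'))) ∧
      (∀ (i : Fin N) (i' : Fin n2),
        A.feat (bipolar N N) ℓ (Sum.inr (Sum.inr i)) =
          A.feat (bipolar n1 n2) ℓ (Sum.inr (Sum.inr i'))) := by
  obtain ⟨N, hN⟩ := stable_all A hloc hec A.L le_rfl
  exact ⟨N, fun n1 n2 h1 h2 ℓ hℓ => hN N N n1 n2 le_rfl le_rfl h1 h2 ℓ hℓ⟩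
end
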